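/- arXiv:1305.1215 — 7 statements merged into one kernel-verified Lean document; each statement's English description precedes it below -/
import Mathlib

section
/- For any sets S₁, S₂ ⊆ ℝⁿ and d ∈ ℕ, B_d(S₁ ∪ S₂) = B_d(S₁) ∩ B_d(S₂). -/
open MvPolynomial

-- monomial bound
lemma mon_bound (n d : ℕ) (a : Fin n → ℝ) (m : Fin n →₀ ℕ)
    (hm : (∑ i, m i) ≤ 2 * d) :
    |∏ i, a i ^ m i| ≤ 1 + ∑ i, a i ^ (2 * d) := by
  have hN : (0:ℝ) ≤ ∑ i, a i ^ (2 * d) := by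
    apply Finset.sum_nonneg
    intro i _
    rw [pow_mul]
    positivity
  rcases Nat.eq_zero_or_pos n with h0 | hn
  · subst h0; simp
  have : Nonempty (Fin n) := Fin.pos_iff_nonempty.mp hn
  have hne : (Finset.univ : Finset (Fin n)).Nonempty := Finset.univ_nonempty
  set s := Finset.univ.sup' hne (fun i => |a i|) with hs
  set b := max 1 s with hb
  have hb1 : (1:ℝ) ≤ b := le_max_left _ _
  have h1 : |∏ i, a i ^ m i| ≤ b ^ (∑ i, m i) := by
    rw [Finset.abs_prod, ← Finset.prod_pow_eq_pow_sum]
    apply Finset.prod_le_prod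
    · intro i _; positivity
    · intro i _
      rw [abs_pow]
      apply pow_le_pow_left₀ (abs_nonneg _)
      exact le_trans (Finset.le_sup' (fun i => |a i|) (Finset.mem_univ i)) (le_max_right _ _)
  have h2 : b ^ (∑ i, m i) ≤ b ^ (2 * d) :=
    pow_le_pow_right₀ hb1 hm
  have h3 : b ^ (2 * d) ≤ 1 + ∑ i, a i ^ (2 * d) := by
    rcases max_cases 1 s with ⟨hbe, _⟩ | ⟨hbe, hlt⟩
    · rw [← hb] at hbe; rw [hbe]; simpa using hN
    · rw [← hb] at hbe
      obtain ⟨j, _, hj⟩ := Finset.exists_mem_eq_sup' hne (fun i => |a i|)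
      have : b ^ (2*d) = a j ^ (2*d) := by
        rw [hbe, hs, hj, ← abs_pow, abs_of_nonneg]
        rw [pow_mul]; positivity
      rw [this]
      have : a j ^ (2*d) ≤ ∑ i, a i ^ (2*d) := by
        apply Finset.single_le_sum (f := fun i => a i ^ (2*d)) _ (Finset.mem_univ j)
        intro i _; rw [pow_mul]; positivity
      linarith
  linarith

lemma poly_bound (n d : ℕ) (q : MvPolynomial (Fin n) ℝ) (hq : q.totalDegree ≤ 2 * d)
    (a : Fin n → ℝ) :
    eval a q ≤ (∑ m ∈ q.support, |coeff m q|) * (1 + ∑ i, a i ^ (2 * d)) := by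
  have hN : (0:ℝ) ≤ 1 + ∑ i, a i ^ (2 * d) := by
    have : (0:ℝ) ≤ ∑ i, a i ^ (2 * d) := by
      apply Finset.sum_nonneg; intro i _; rw [pow_mul]; positivity
    linarith
  rw [eval_eq', Finset.sum_mul]
  apply Finset.sum_le_sum
  intro m hm
  have hdeg : (∑ i, m i) ≤ 2 * d := by
    refine le_trans ?_ (le_trans (le_totalDegree hm) hq)
    rw [Finsupp.sum]
    exact le_of_eq (Finset.sum_subset (Finset.subset_univ _)
      (fun i _ hi => Finsupp.notMem_support_iff.mp hi)).symm
  calc coeff m q * ∏ i, a i ^ m i ≤ |coeff m q * ∏ i, a i ^ m i| := le_abs_self _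
    _ = |coeff m q| * |∏ i, a i ^ m i| := abs_mul _ _
    _ ≤ |coeff m q| * (1 + ∑ i, a i ^ (2 * d)) :=
        mul_le_mul_of_nonneg_left (mon_bound n d a m hdeg) (abs_nonneg _)

def Bset (n d : ℕ) (S : Set (Fin n → ℝ)) : Set (MvPolynomial (Fin n) ℝ) :=
  {p | ∃ q : MvPolynomial (Fin n) ℝ, q.totalDegree ≤ 2 * d ∧ ∀ a ∈ S, (eval a p) ^ 2 ≤ eval a q}

theorem Bd_union (n d : ℕ) (S₁ S₂ : Set (Fin n → ℝ)) :
    Bset n d (S₁ ∪ S₂) = Bset n d S₁ ∩ Bset n d S₂ := by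
  ext p
  constructor
  · rintro ⟨q, hq, h⟩
    exact ⟨⟨q, hq, fun a ha => h a (Or.inl ha)⟩, ⟨q, hq, fun a ha => h a (Or.inr ha)⟩⟩
  · rintro ⟨⟨q₁, hq₁, h₁⟩, ⟨q₂, hq₂, h₂⟩⟩
    set C₁ := ∑ m ∈ q₁.support, |coeff m q₁| with hC₁
    set C₂ := ∑ m ∈ q₂.support, |coeff m q₂| with hC₂
    have hC₁0 : 0 ≤ C₁ := Finset.sum_nonneg fun m _ => abs_nonneg _
    have hC₂0 : 0 ≤ C₂ := Finset.sum_nonneg fun m _ => abs_nonneg _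
    set N : MvPolynomial (Fin n) ℝ := ∑ i, X i ^ (2 * d) with hNdef
    refine ⟨C (C₁ + C₂) * (1 + N), ?_, ?_⟩
    · apply le_trans (totalDegree_mul _ _)
      have h1 : (C (C₁ + C₂) : MvPolynomial (Fin n) ℝ).totalDegree = 0 := totalDegree_C _
      have h2 : (1 + N).totalDegree ≤ 2 * d := by
        apply le_trans (totalDegree_add _ _)
        simp only [totalDegree_one, Nat.zero_le, max_le_iff, true_and]
        apply le_trans (totalDegree_finset_sum _ _)
        apply Finset.sup_le
        intro i _
        simp [totalDegree_X_pow]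
      omega
    · have hNev : ∀ a : Fin n → ℝ, eval a N = ∑ i, a i ^ (2 * d) := by
        intro a; simp [hNdef]
      have hNnn : ∀ a : Fin n → ℝ, (0:ℝ) ≤ 1 + eval a N := by
        intro a
        rw [hNev]
        have : (0:ℝ) ≤ ∑ i, a i ^ (2 * d) := by
          apply Finset.sum_nonneg; intro i _; rw [pow_mul]; positivity
        linarith
      intro a ha
      have hev : eval a (C (C₁ + C₂) * (1 + N)) = C₁ * (1 + eval a N) + C₂ * (1 + eval a N) := by
        simp [add_mul]
      rw [hev]
      rcases ha with ha | ha
      · have := poly_bound n d q₁ hq₁ a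
        rw [← hNev a, ← hC₁] at this
        have h2 := mul_nonneg hC₂0 (hNnn a)
        have := h₁ a ha
        linarith
      · have := poly_bound n d q₂ hq₂ a
        rw [← hNev a, ← hC₂] at this
        have h2 := mul_nonneg hC₁0 (hNnn a)
        have := h₂ a ha
        linarith
end

section
/- If S ⊆ ℝⁿ contains a full-dimensional convex cone K (i.e., a convex cone with nonempty interior), then for every d ∈ ℕ, B_d(S) = ℝ[x]_d, the space of polynomials of total degree at most d. -/
/-
Restricting a polynomial `p` of total degree `r` to the ray `t ↦ t • x` gives a univariate
polynomial whose `k`-th coefficient is the degree-`k` homogeneous component of `p` evaluated at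
`x`. The leading form of a nonzero `p` cannot vanish on the open set `interior K`, so for some
`x ∈ K` the restriction of `p` has degree exactly `r`, and `p ^ 2` grows like `t ^ (2 * r)` along
the ray, which lies in `K ⊆ S`. A polynomial `q` dominating `p ^ 2` on `S` therefore has degree at
least `2 * r`.
-/

open MvPolynomial

open Filter

namespace Polynomial

variable {𝕜 : Type*} [NormedField 𝕜] [LinearOrder 𝕜] [IsStrictOrderedRing 𝕜] [OrderTopology 𝕜]

theorem eventually_eval_lt_eval_sq_of_natDegree_lt {P Q : 𝕜[X]}
    (h : Q.natDegree < 2 * P.natDegree) : ∀ᶠ t in atTop, Q.eval t < P.eval t ^ 2 := by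
  have hlt : Q.natDegree < (P ^ 2).natDegree := by rwa [natDegree_pow]
  have hdeg : 0 < (P ^ 2 - Q).degree := by
    rw [← natDegree_pos_iff_degree_pos, natDegree_sub_eq_left_of_natDegree_lt hlt]
    omega
  have hlead : 0 ≤ (P ^ 2 - Q).leadingCoeff := by
    rw [leadingCoeff_sub_of_degree_lt (degree_lt_degree hlt), leadingCoeff_pow]
    positivity
  filter_upwards [(tendsto_atTop_of_leadingCoeff_nonneg _ hdeg hlead).eventually_gt_atTop 0]
    with t ht
  simpa [sub_pos] using ht

end Polynomial

namespace MvPolynomial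

section AlongRay

variable {σ R : Type*} [CommSemiring R]

noncomputable def alongRay (x : σ → R) : MvPolynomial σ R →ₐ[R] Polynomial R :=
  aeval fun i => Polynomial.C (x i) * Polynomial.X

theorem eval_alongRay (x : σ → R) (p : MvPolynomial σ R) (t : R) :
    (alongRay x p).eval t = eval (t • x) p := by
  induction p using induction_on with
  | C a => simp [alongRay]
  | add p q hp hq => simp [hp, hq]
  | mul_X p i hp =>
    rw [map_mul, Polynomial.eval_mul, hp, eval_mul]
    simp only [alongRay, aeval_X, eval_X, Polynomial.eval_mul, Polynomial.eval_C,
      Polynomial.eval_X, Pi.smul_apply, smul_eq_mul, mul_comm]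

theorem alongRay_monomial (x : σ → R) (s : σ →₀ ℕ) (c : R) :
    alongRay x (monomial s c) =
      Polynomial.C (eval x (monomial s c)) * Polynomial.X ^ s.degree := by
  rw [alongRay, aeval_monomial, eval_monomial, Polynomial.algebraMap_eq, Polynomial.C_mul,
    mul_assoc]
  simp only [Finsupp.prod, mul_pow, Finset.prod_mul_distrib, map_prod, Polynomial.C_pow,
    Finset.prod_pow_eq_pow_sum, Finsupp.degree_apply]

theorem coeff_alongRay (x : σ → R) (p : MvPolynomial σ R) (k : ℕ) :
    (alongRay x p).coeff k = eval x (homogeneousComponent k p) := by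
  induction p using induction_on' with
  | monomial s c =>
    rw [alongRay_monomial, Polynomial.coeff_C_mul_X_pow,
      homogeneousComponent_of_mem (isHomogeneous_monomial c rfl)]
    split_ifs <;> simp
  | add p q hp hq => simp [hp, hq]

variable {x : σ → R} {p : MvPolynomial σ R}

theorem natDegree_alongRay_le : (alongRay x p).natDegree ≤ p.totalDegree :=
  Polynomial.natDegree_le_iff_coeff_eq_zero.2 fun _ hm => by
    rw [coeff_alongRay, homogeneousComponent_eq_zero _ _ hm, map_zero]

theorem natDegree_alongRay (hx : eval x (homogeneousComponent p.totalDegree p) ≠ 0) :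
    (alongRay x p).natDegree = p.totalDegree :=
  natDegree_alongRay_le.antisymm (Polynomial.le_natDegree_of_ne_zero (by rwa [coeff_alongRay]))

end AlongRay

theorem homogeneousComponent_totalDegree_ne_zero {σ R : Type*} [CommSemiring R]
    {p : MvPolynomial σ R} (hp : p ≠ 0) : homogeneousComponent p.totalDegree p ≠ 0 := by
  obtain ⟨s, hs, hsup⟩ := Finset.exists_mem_eq_sup p.support (support_nonempty.2 hp)
    fun s => s.sum fun _ e => e
  have hsd : s.degree = p.totalDegree := hsup.symm
  intro h
  have := congrArg (coeff s) h
  rw [coeff_homogeneousComponent, if_pos hsd, coeff_zero] at this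
  exact mem_support_iff.1 hs this

theorem eq_zero_of_isOpen_of_eval_eq_zero {σ : Type*} [Fintype σ] {p : MvPolynomial σ ℝ}
    {U : Set (σ → ℝ)} (hU : IsOpen U) (hne : U.Nonempty) (h : ∀ x ∈ U, eval x p = 0) :
    p = 0 := by
  obtain ⟨a, ha⟩ := hne
  obtain ⟨δ, hδ, hball⟩ := Metric.isOpen_iff.1 hU a ha
  refine funext_set (fun i => Metric.ball (a i) δ) (fun i => ?_) fun x hx => ?_
  · rw [Real.ball_eq_Ioo]
    exact Set.Ioo_infinite (by linarith)
  · rw [map_zero]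
    exact h x (hball (by rwa [ball_pi _ hδ]))

theorem exists_eval_homogeneousComponent_totalDegree_ne_zero {σ : Type*} [Fintype σ]
    {p : MvPolynomial σ ℝ} (hp : p ≠ 0) {U : Set (σ → ℝ)} (hU : IsOpen U) (hne : U.Nonempty) :
    ∃ x ∈ U, eval x (homogeneousComponent p.totalDegree p) ≠ 0 := by
  by_contra! h
  exact homogeneousComponent_totalDegree_ne_zero hp (eq_zero_of_isOpen_of_eval_eq_zero hU hne h)

theorem two_mul_totalDegree_le_of_sq_le_on_ray {σ 𝕜 : Type*} [NormedField 𝕜] [LinearOrder 𝕜]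
    [IsStrictOrderedRing 𝕜] [OrderTopology 𝕜] {p q : MvPolynomial σ 𝕜} {x : σ → 𝕜}
    (hx : eval x (homogeneousComponent p.totalDegree p) ≠ 0)
    (hle : ∀ t : 𝕜, 0 < t → eval (t • x) p ^ 2 ≤ eval (t • x) q) :
    2 * p.totalDegree ≤ q.totalDegree := by
  by_contra! hlt
  have hdeg : (alongRay x q).natDegree < 2 * (alongRay x p).natDegree := by
    rw [natDegree_alongRay hx]
    exact natDegree_alongRay_le.trans_lt hlt
  obtain ⟨t, hqp, ht⟩ :=
    ((Polynomial.eventually_eval_lt_eval_sq_of_natDegree_lt hdeg).and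
      (eventually_gt_atTop 0)).exists
  rw [eval_alongRay, eval_alongRay] at hqp
  exact (hle t ht).not_gt hqp

end MvPolynomial

theorem Bd_of_full_dim_cone_general (n : ℕ) (S K : Set (Fin n → ℝ))
    (hKS : K ⊆ S)
    (hcone : ∀ c : ℝ, 0 < c → ∀ x ∈ K, c • x ∈ K)
    (hint : (interior K).Nonempty) (d : ℕ) :
    Bset n d S = {p : MvPolynomial (Fin n) ℝ | p.totalDegree ≤ d} := by
  ext p
  simp only [Bset, Set.mem_ofPred_eq]
  constructor
  · rintro ⟨q, hq, hle⟩
    by_contra! hd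
    have hp : p ≠ 0 := by
      rintro rfl
      simp at hd
    obtain ⟨x, hxK, hx⟩ :=
      exists_eval_homogeneousComponent_totalDegree_ne_zero hp isOpen_interior hint
    have := two_mul_totalDegree_le_of_sq_le_on_ray hx fun t ht =>
      hle _ (hKS (hcone t ht x (interior_subset hxK)))
    omega
  · intro hp
    exact ⟨p ^ 2, (totalDegree_pow p 2).trans (by omega), fun a _ => (map_pow _ _ _).ge⟩

theorem Bd_of_full_dim_cone (n : ℕ) (S K : Set (Fin n → ℝ))
    (hKS : K ⊆ S) (hconv : Convex ℝ K)
    (hcone : ∀ c : ℝ, 0 < c → ∀ x ∈ K, c • x ∈ K)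
    (hint : (interior K).Nonempty) (d : ℕ) :
    Bset n d S = {p : MvPolynomial (Fin n) ℝ | p.totalDegree ≤ d} :=
  Bd_of_full_dim_cone_general n S K hKS hcone hint d
end

section
/- Let S = ([0,1] × ℝ) ∪ (ℝ × [0,1]) ⊆ ℝ². A polynomial p ∈ ℝ[x₁,x₂] belongs to B_d(S) if and only if deg_{x₁}(p) ≤ d and deg_{x₂}(p) ≤ d, i.e., the degree of p in each variable separately is at most d. -/
open MvPolynomial

open Polynomial Filter in
lemma univ_bound {f g : Polynomial ℝ} {d : ℕ} (hg : g.natDegree ≤ 2*d)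
    (h : ∀ y : ℝ, f.eval y ^ 2 ≤ g.eval y) : f.natDegree ≤ d := by
  by_contra hf
  push_neg at hf
  have hf0 : f ≠ 0 := by rintro rfl; simp at hf
  have hdeg2 : (f^2).natDegree = 2 * f.natDegree := natDegree_pow f 2
  have hglt : g.natDegree < (f^2).natDegree := by omega
  have hdglt : g.degree < (f^2).degree := by
    apply degree_lt_degree; omega
  set h' : Polynomial ℝ := g - f^2 with hh'
  have hne : h'.natDegree = (f^2).natDegree :=
    natDegree_sub_eq_right_of_natDegree_lt hglt
  have hlc : h'.leadingCoeff = -(f^2).leadingCoeff := by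
    rw [hh', sub_eq_add_neg, leadingCoeff_add_of_degree_lt (by simpa using hdglt)]
    simp
  have hlc' : h'.leadingCoeff ≤ 0 := by
    rw [hlc, leadingCoeff_pow]
    exact neg_nonpos.2 (sq_nonneg _)
  have hdpos : 0 < h'.degree := by
    rw [← natDegree_pos_iff_degree_pos, hne, hdeg2]; omega
  have htend := tendsto_atBot_of_leadingCoeff_nonpos h' hdpos hlc'
  obtain ⟨y, hy⟩ := (htend.eventually (eventually_le_atBot (-1))).exists
  have := h y
  simp only [hh', Polynomial.eval_sub, Polynomial.eval_pow] at hy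
  linarith

lemma eval_aeval_X (c : MvPolynomial (Fin 1) ℝ) (t : ℝ) :
    Polynomial.eval t (aeval (fun _ : Fin 1 => Polynomial.X) c : Polynomial ℝ)
      = eval (fun _ => t) c := by
  have h := eval₂_comp_left (Polynomial.evalRingHom t) (algebraMap ℝ (Polynomial ℝ))
    (fun _ : Fin 1 => Polynomial.X) c
  simp only [Polynomial.coe_evalRingHom, Function.comp] at h
  rw [aeval_def, h]
  have h2 : (Polynomial.evalRingHom t).comp (algebraMap ℝ (Polynomial ℝ)) = RingHom.id ℝ := by
    ext r; simp
  have h3 : (Polynomial.eval t ∘ fun _ : Fin 1 => Polynomial.X) = fun _ : Fin 1 => t := by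
    funext i; simp
  rw [h2, h3]
  exact eval₂_id c

lemma exists_nonzero (c : MvPolynomial (Fin 1) ℝ) (hc : c ≠ 0) :
    ∃ t ∈ Set.Icc (0:ℝ) 1, eval (fun _ => t) c ≠ 0 := by
  by_contra hall
  push_neg at hall
  apply hc
  have hu : (aeval (fun _ : Fin 1 => Polynomial.X) c : Polynomial ℝ) = 0 := by
    apply Polynomial.eq_zero_of_infinite_isRoot
    apply Set.Infinite.mono (s := Set.Icc (0:ℝ) 1) ?_
      (Set.Icc_infinite (by norm_num : (0:ℝ) < 1))
    intro t ht
    show Polynomial.IsRoot _ t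
    rw [Polynomial.IsRoot, eval_aeval_X]
    exact hall t ht
  apply MvPolynomial.funext (q := 0)
  intro x
  have hx : x = fun _ => x 0 := by funext i; fin_cases i; rfl
  rw [map_zero, hx, ← eval_aeval_X, hu, Polynomial.eval_zero]
lemma aux_deg0 (d : ℕ) (p q : MvPolynomial (Fin 2) ℝ) (hq : q.totalDegree ≤ 2*d)
    (h : ∀ a : Fin 2 → ℝ, a 1 ∈ Set.Icc (0:ℝ) 1 → (eval a p)^2 ≤ eval a q) :
    p.degreeOf 0 ≤ d := by
  by_contra hd
  push_neg at hd
  set P := finSuccEquiv ℝ 1 p with hP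
  have hN : P.natDegree = p.degreeOf 0 := natDegree_finSuccEquiv p
  have hP0 : P ≠ 0 := by
    intro h0
    rw [h0, Polynomial.natDegree_zero] at hN
    omega
  have hc : P.coeff P.natDegree ≠ 0 := Polynomial.leadingCoeff_ne_zero.mpr hP0
  obtain ⟨t, ht, hct⟩ := exists_nonzero _ hc
  set s : Fin 1 → ℝ := fun _ => t with hs
  set f := Polynomial.map (eval s) P with hf
  have hfN : f.coeff P.natDegree ≠ 0 := by
    rw [hf, Polynomial.coeff_map]
    exact hct
  have hfdeg : d < f.natDegree :=
    lt_of_lt_of_le (by omega) (Polynomial.le_natDegree_of_ne_zero hfN)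
  set g := Polynomial.map (eval s) (finSuccEquiv ℝ 1 q) with hg
  have hgdeg : g.natDegree ≤ 2*d := by
    refine le_trans Polynomial.natDegree_map_le ?_
    rw [natDegree_finSuccEquiv]
    exact (degreeOf_le_totalDegree q 0).trans hq
  have hb : f.natDegree ≤ d := univ_bound hgdeg (fun y => by
    have ha1 : (Fin.cons y s : Fin 2 → ℝ) 1 = t := by
      show (Fin.cons y s : Fin 2 → ℝ) (Fin.succ 0) = t
      rw [Fin.cons_succ]
    have := h (Fin.cons y s) (by rw [ha1]; exact ht)
    rwa [eval_eq_eval_mv_eval', eval_eq_eval_mv_eval'] at this)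
  omega
lemma pow_le_B (x : ℝ) (k d : ℕ) (hk : k ≤ d) : |x|^k ≤ (max 1 |x|)^d :=
  le_trans (pow_le_pow_left₀ (abs_nonneg x) (le_max_right _ _) k)
    (pow_le_pow_right₀ (le_max_left _ _) hk)

lemma B_sq_le (x : ℝ) (d : ℕ) : ((max 1 |x|)^d)^2 ≤ (1 + x^2)^d := by
  rw [← pow_mul, mul_comm, pow_mul]
  apply pow_le_pow_left₀ (by positivity)
  rcases max_cases 1 |x| with ⟨hm, _⟩ | ⟨hm, _⟩ <;> rw [hm] <;> nlinarith [sq_abs x, sq_nonneg x]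

lemma backward (d : ℕ) (p : MvPolynomial (Fin 2) ℝ) (h0 : p.degreeOf 0 ≤ d)
    (h1 : p.degreeOf 1 ≤ d) :
    ∃ q : MvPolynomial (Fin 2) ℝ, q.totalDegree ≤ 2 * d ∧
      ∀ a : Fin 2 → ℝ, (a 0 ∈ Set.Icc (0:ℝ) 1 ∨ a 1 ∈ Set.Icc (0:ℝ) 1) →
        (eval a p) ^ 2 ≤ eval a q := by
  set Cr : ℝ := ∑ m ∈ p.support, |coeff m p| with hCr
  refine ⟨C (Cr^2) * ((1 + X 0^2)^d + (1 + X 1^2)^d), ?_, ?_⟩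
  · refine le_trans (totalDegree_mul _ _) ?_
    rw [totalDegree_C, zero_add]
    refine le_trans (totalDegree_add _ _) ?_
    have hX : ∀ i : Fin 2, ((1 + X i^2 : MvPolynomial (Fin 2) ℝ)^d).totalDegree ≤ 2*d := by
      intro i
      refine le_trans (totalDegree_pow _ _) ?_
      have : ((1 : MvPolynomial (Fin 2) ℝ) + X i^2).totalDegree ≤ 2 := by
        refine le_trans (totalDegree_add _ _) ?_
        simp [totalDegree_one, totalDegree_X_pow]
      calc d * ((1 : MvPolynomial (Fin 2) ℝ) + X i^2).totalDegree ≤ d * 2 :=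
            Nat.mul_le_mul_left d this
        _ = 2 * d := by ring
    simp [hX 0, hX 1]
  · intro a ha
    have hCrnn : 0 ≤ Cr := Finset.sum_nonneg fun m _ => abs_nonneg _
    -- bound on |eval a p| depending on which coordinate is in [0,1]
    have key : ∀ i j : Fin 2, a i ∈ Set.Icc (0:ℝ) 1 →
        (∀ m : Fin 2 →₀ ℕ, (∏ k, |a k| ^ m k) = |a i| ^ m i * |a j| ^ m j) →
        |eval a p| ≤ Cr * (max 1 |a j|)^d := by
      intro i j hai hprod
      have hai1 : |a i| ≤ 1 := abs_le.mpr ⟨by linarith [hai.1], hai.2⟩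
      rw [eval_eq']
      calc |∑ m ∈ p.support, coeff m p * ∏ k, a k ^ m k|
          ≤ ∑ m ∈ p.support, |coeff m p * ∏ k, a k ^ m k| :=
            Finset.abs_sum_le_sum_abs _ _
        _ ≤ ∑ m ∈ p.support, |coeff m p| * (max 1 |a j|)^d := by
            refine Finset.sum_le_sum fun m hm => ?_
            rw [abs_mul]
            refine mul_le_mul_of_nonneg_left ?_ (abs_nonneg _)
            have habs : |∏ k, a k ^ m k| = ∏ k, |a k| ^ m k := by
              rw [Finset.abs_prod]
              exact Finset.prod_congr rfl fun k _ => abs_pow _ _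
            rw [habs, hprod m]
            have hmj : m j ≤ d := by
              have : m j ≤ p.degreeOf j := by
                rw [degreeOf_eq_sup]; exact Finset.le_sup (f := fun m => m j) hm
              fin_cases j <;> simp_all <;> omega
            calc |a i| ^ m i * |a j| ^ m j ≤ 1 * ((max 1 |a j|)^d) := by
                  refine mul_le_mul ?_ (pow_le_B _ _ _ hmj) (by positivity) zero_le_one
                  exact pow_le_one₀ (abs_nonneg _) hai1
              _ = (max 1 |a j|)^d := one_mul _
        _ = Cr * (max 1 |a j|)^d := by rw [← Finset.sum_mul]
    have heq : eval a (C (Cr^2) * ((1 + X 0^2)^d + (1 + X 1^2)^d))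
        = Cr^2 * ((1 + (a 0)^2)^d + (1 + (a 1)^2)^d) := by
      simp
    rw [heq]
    have hsq : ∀ j : Fin 2, |eval a p| ≤ Cr * (max 1 |a j|)^d →
        (eval a p)^2 ≤ Cr^2 * (1 + (a j)^2)^d := by
      intro j hb
      have h2 : (eval a p)^2 ≤ (Cr * (max 1 |a j|)^d)^2 := by
        rw [← sq_abs]
        exact pow_le_pow_left₀ (abs_nonneg _) hb 2
      calc (eval a p)^2 ≤ (Cr * (max 1 |a j|)^d)^2 := h2
        _ = Cr^2 * ((max 1 |a j|)^d)^2 := by ring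
        _ ≤ Cr^2 * (1 + (a j)^2)^d :=
            mul_le_mul_of_nonneg_left (B_sq_le _ _) (by positivity)
    rcases ha with hai | hai
    · have hb := key 0 1 hai (fun m => by rw [Fin.prod_univ_two])
      have := hsq 1 hb
      have hpos : (0:ℝ) ≤ (1 + (a 0)^2)^d := by positivity
      nlinarith [sq_nonneg Cr]
    · have hb := key 1 0 hai (fun m => by rw [Fin.prod_univ_two]; ring)
      have := hsq 0 hb
      have hpos : (0:ℝ) ≤ (1 + (a 1)^2)^d := by positivity
      nlinarith [sq_nonneg Cr]

theorem Bd_cross_iff (d : ℕ) (p : MvPolynomial (Fin 2) ℝ) :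
    p ∈ Bset 2 d {a : Fin 2 → ℝ | a 0 ∈ Set.Icc (0:ℝ) 1 ∨ a 1 ∈ Set.Icc (0:ℝ) 1} ↔
      p.degreeOf 0 ≤ d ∧ p.degreeOf 1 ≤ d := by
  constructor
  · rintro ⟨q, hq, h⟩
    constructor
    · exact aux_deg0 d p q hq fun a ha => h a (Or.inr ha)
    · set e : Equiv.Perm (Fin 2) := Equiv.swap 0 1 with he
      have h' : ∀ a : Fin 2 → ℝ, a 1 ∈ Set.Icc (0:ℝ) 1 →
          (eval a (rename e p))^2 ≤ eval a (rename e q) := by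
        intro a ha
        rw [eval_rename, eval_rename]
        refine h (a ∘ e) (Or.inl ?_)
        show a (e 0) ∈ Set.Icc (0:ℝ) 1
        simpa [he] using ha
      have hq' : (rename e q).totalDegree ≤ 2 * d :=
        le_trans (totalDegree_rename_le _ _) hq
      have := aux_deg0 d (rename e p) (rename e q) hq' h'
      have hr := degreeOf_rename_of_injective (p := p) (f := e) e.injective 1
      rw [show e 1 = 0 by simp [he]] at hr
      rwa [hr] at this
  · rintro ⟨h0, h1⟩
    obtain ⟨q, hq, h⟩ := backward d p h0 h1
    exact ⟨q, hq, fun a ha => h a ha⟩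
end

section
/- Let S = {(a,b) ∈ ℝ² | 0 ≤ a and exp(a) ≤ b}. Then for every d ∈ ℕ, the truncated exponential polynomial p_d = ∑_{i=0}^d x₁^i/i! satisfies p_d ∈ B₁(S); in particular 0 ≤ p_d(a,b) ≤ b for all (a,b) ∈ S. Consequently B₁(S) is an infinite-dimensional real vector space. -/
/-! The partial sums of the exponential series satisfy `0 ≤ p_d(a) ≤ exp a ≤ b` on `S`, so
`x₂²` is a degree-2 certificate for every `p_d`. Since `x₁^d = d! (p_d - p_{d-1})`, the span of
`B₁(S)` contains all powers of `x₁`, which are linearly independent. -/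

open MvPolynomial

/-- The region above the exponential graph. -/
def Sexp : Set (Fin 2 → ℝ) := {a | 0 ≤ a 0 ∧ Real.exp (a 0) ≤ a 1}

/-- Truncated exponential polynomial `∑_{i=0}^d x₁^i / i!`. -/
noncomputable def pexp (d : ℕ) : MvPolynomial (Fin 2) ℝ :=
  ∑ i ∈ Finset.range (d + 1), C ((1 : ℝ) / (Nat.factorial i)) * X 0 ^ i

lemma mem_Bset_of_abs_eval_le {n d : ℕ} {S : Set (Fin n → ℝ)} {p q : MvPolynomial (Fin n) ℝ}
    (hq : q.totalDegree ≤ d) (hpq : ∀ a ∈ S, |eval a p| ≤ eval a q) : p ∈ Bset n d S := by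
  refine ⟨q ^ 2, (totalDegree_pow q 2).trans (by omega), fun a ha => ?_⟩
  rw [eval_pow, ← sq_abs]
  exact pow_le_pow_left₀ (abs_nonneg _) (hpq a ha) 2

lemma eval_pexp (d : ℕ) (a : Fin 2 → ℝ) :
    eval a (pexp d) = ∑ i ∈ Finset.range (d + 1), a 0 ^ i / i.factorial := by
  simp [pexp, div_eq_mul_inv, mul_comm]

lemma eval_pexp_nonneg (d : ℕ) {a : Fin 2 → ℝ} (ha : 0 ≤ a 0) : 0 ≤ eval a (pexp d) := by
  rw [eval_pexp]
  positivity

lemma eval_pexp_le_exp (d : ℕ) {a : Fin 2 → ℝ} (ha : 0 ≤ a 0) :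
    eval a (pexp d) ≤ Real.exp (a 0) := by
  rw [eval_pexp]
  exact Real.sum_le_exp_of_nonneg ha (d + 1)

lemma eval_pexp_mem_Icc (d : ℕ) {a : Fin 2 → ℝ} (ha : a ∈ Sexp) :
    eval a (pexp d) ∈ Set.Icc 0 (a 1) :=
  ⟨eval_pexp_nonneg d ha.1, (eval_pexp_le_exp d ha.1).trans ha.2⟩

lemma pexp_mem_Bset (d : ℕ) : pexp d ∈ Bset 2 1 Sexp := by
  refine mem_Bset_of_abs_eval_le (q := X 1) (totalDegree_X 1).le fun a ha => ?_
  obtain ⟨h0, h1⟩ := eval_pexp_mem_Icc d ha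
  rw [abs_of_nonneg h0, eval_X]
  exact h1

lemma pexp_succ_sub (d : ℕ) :
    pexp (d + 1) - pexp d = C (1 / ((d + 1).factorial : ℝ)) * X 0 ^ (d + 1) :=
  Finset.sum_range_succ_sub_sum _

lemma X_zero_pow_mem_span_Bset (d : ℕ) :
    (X 0 : MvPolynomial (Fin 2) ℝ) ^ d ∈ Submodule.span ℝ (Bset 2 1 Sexp) := by
  have mem (k : ℕ) := Submodule.subset_span (R := ℝ) (pexp_mem_Bset k)
  cases d with
  | zero => simpa [pexp] using mem 0
  | succ d =>
    have hX : (X 0 : MvPolynomial (Fin 2) ℝ) ^ (d + 1)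
        = ((d + 1).factorial : ℝ) • (pexp (d + 1) - pexp d) := by
      rw [pexp_succ_sub, smul_eq_C_mul, ← mul_assoc, ← C_mul, mul_one_div_cancel (by positivity),
        C_1, one_mul]
    rw [hX]
    exact Submodule.smul_mem _ _ (Submodule.sub_mem _ (mem (d + 1)) (mem d))

lemma linearIndependent_X_pow {σ R : Type*} [CommSemiring R] (i : σ) :
    LinearIndependent R fun d : ℕ => (X i : MvPolynomial σ R) ^ d := by
  have h := (basisMonomials σ R).linearIndependent.comp _ (Finsupp.single_injective i)
  rw [coe_basisMonomials] at h
  simpa only [X_pow_eq_monomial, Function.comp_def] using h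

lemma not_finite_span_of_linearIndependent {ι R M : Type*} [Infinite ι] [Ring R]
    [StrongRankCondition R] [AddCommGroup M] [Module R M] {s : Set M} {v : ι → M}
    (hv : LinearIndependent R v) (hs : ∀ i, v i ∈ Submodule.span R s) :
    ¬ Module.Finite R (Submodule.span R s) := fun _ =>
  Module.Finite.not_linearIndependent_of_infinite (R := R)
    (fun i => (⟨v i, hs i⟩ : Submodule.span R s)) (.of_comp (Submodule.span R s).subtype hv)

theorem truncated_exp_in_B1 :
    (∀ d : ℕ, pexp d ∈ Bset 2 1 Sexp) ∧
    (∀ d : ℕ, ∀ a ∈ Sexp, 0 ≤ eval a (pexp d) ∧ eval a (pexp d) ≤ a 1) ∧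
    ¬ Module.Finite ℝ (Submodule.span ℝ (Bset 2 1 Sexp)) :=
  ⟨pexp_mem_Bset, fun d _ ha => eval_pexp_mem_Icc d ha,
    not_finite_span_of_linearIndependent (linearIndependent_X_pow 0) X_zero_pow_mem_span_Bset⟩
end

section
/- Let S ⊆ ℝⁿ be a finite union of standard tentacles in directions z⁽¹⁾,…,z⁽ᵐ⁾ ∈ ℤⁿ. Then for all d ∈ ℕ, B_d(S) = {p ∈ ℝ[x] | deg_i(p) ≤ d·φ_i for i = 1,…,m}, where deg_i is the weighted degree with weights z⁽ⁱ⁾ and φ_i = max{0, z⁽ⁱ⁾₁,…,z⁽ⁱ⁾ₙ}. In particular, B_d(S) is spanned as a vector space by the monomials it contains. -/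
open MvPolynomial Filter Topology

/-- Semialgebraic subsets of `ℝⁿ`: the boolean algebra generated by sets
`{a | 0 < p(a)}` for polynomials `p`. -/
inductive IsSemialgebraic {n : ℕ} : Set (Fin n → ℝ) → Prop where
  | lt (p : MvPolynomial (Fin n) ℝ) : IsSemialgebraic {a | 0 < eval a p}
  | compl {s : Set (Fin n → ℝ)} : IsSemialgebraic s → IsSemialgebraic sᶜ
  | union {s t : Set (Fin n → ℝ)} :
      IsSemialgebraic s → IsSemialgebraic t → IsSemialgebraic (s ∪ t)

/-- Weighted degree with weights `z`. -/
def wdeg {n : ℕ} (z : Fin n → ℤ) (p : MvPolynomial (Fin n) ℝ) : WithBot ℤ :=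
  p.support.sup fun α => ((∑ j, z j * (α j : ℤ) : ℤ) : WithBot ℤ)

/-- `φ_z = max {0, z₁, …, zₙ}`. -/
def phiz {n : ℕ} (z : Fin n → ℤ) : ℤ :=
  ((Finset.univ.sup fun j => (z j).toNat : ℕ) : ℤ)


lemma zpow_finsum {ι : Type*} {l : ℝ} (hl : l ≠ 0) (s : Finset ι) (e : ι → ℤ) :
    ∏ x ∈ s, l ^ e x = l ^ ∑ x ∈ s, e x := by
  induction s using Finset.cons_induction with
  | empty => simp
  | cons a s ha ih => rw [Finset.prod_cons, Finset.sum_cons, zpow_add₀ hl, ih]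

lemma exists_eval_ne_zero_of_ne_zero {n : ℕ} (p : MvPolynomial (Fin n) ℝ) (hp : p ≠ 0)
    {U : Set (Fin n → ℝ)} (hU : IsOpen U) (hne : U.Nonempty) :
    ∃ x ∈ U, eval x p ≠ 0 := by
  by_contra h
  push_neg at h
  obtain ⟨x₀, hx₀⟩ := hne
  have hana : AnalyticOnNhd ℝ (fun x : Fin n → ℝ => eval x p) Set.univ := by
    simpa using AnalyticOnNhd.eval_continuousLinearMap (ContinuousLinearMap.id ℝ (Fin n → ℝ)) p
  have h0 : (fun x : Fin n → ℝ => eval x p) =ᶠ[𝓝 x₀] 0 := by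
    filter_upwards [hU.mem_nhds hx₀] with x hx using h x hx
  have hz := hana.eqOn_zero_of_preconnected_of_eventuallyEq_zero isPreconnected_univ
    (Set.mem_univ x₀) h0
  refine hp (MvPolynomial.funext fun x => ?_)
  simpa using hz (Set.mem_univ x)

lemma eval_ray {n : ℕ} (z : Fin n → ℤ) (b : Fin n → ℝ) (p : MvPolynomial (Fin n) ℝ)
    {l : ℝ} (hl : 0 < l) :
    eval (fun j => l ^ (z j) * b j) p
      = ∑ α ∈ p.support, coeff α p * (∏ j, b j ^ α j) * l ^ (∑ j, z j * (α j : ℤ)) := by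
  rw [eval_eq']
  refine Finset.sum_congr rfl fun α _ => ?_
  rw [mul_assoc]
  congr 1
  have h1 : ∀ j : Fin n, (l ^ z j * b j) ^ α j = l ^ (z j * (α j : ℤ)) * b j ^ α j := by
    intro j
    rw [mul_pow, zpow_mul, zpow_natCast]
  simp_rw [h1]
  rw [Finset.prod_mul_distrib, mul_comm, zpow_finsum (ne_of_gt hl)]

lemma tendsto_sum_zpow {ι : Type*} (s : Finset ι) (c : ι → ℝ) (W : ι → ℤ) (w : ℤ)
    (hW : ∀ i ∈ s, W i ≤ w) :
    Tendsto (fun l : ℝ => ∑ i ∈ s, c i * l ^ (W i - w)) atTop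
      (𝓝 (∑ i ∈ s, if W i = w then c i else 0)) := by
  refine tendsto_finset_sum _ fun i hi => ?_
  by_cases h : W i = w
  · simpa [h] using tendsto_const_nhds
  · have hneg : W i - w < 0 := sub_neg.mpr (lt_of_le_of_ne (hW i hi) h)
    simpa [h] using (tendsto_zpow_atTop_zero hneg).const_mul (c i)

lemma phiz_nonneg {n : ℕ} (z : Fin n → ℤ) : 0 ≤ phiz z := Int.natCast_nonneg _

lemma le_phiz {n : ℕ} (z : Fin n → ℤ) (j : Fin n) : z j ≤ phiz z := by
  refine le_trans (Int.self_le_toNat _) ?_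
  exact_mod_cast Nat.cast_le.mpr (Finset.le_sup (f := fun j => (z j).toNat) (Finset.mem_univ j))

lemma sum_fin_eq_finsupp_sum {n : ℕ} (α : Fin n →₀ ℕ) :
    (∑ j, (α j : ℤ)) = ((α.sum fun _ e => e : ℕ) : ℤ) := by
  rw [Finsupp.sum_fintype]
  · push_cast; rfl
  · intro; rfl

-- weighted degree of a monomial exponent appearing in q is at most (totalDegree q) * phiz
lemma wexp_le {n : ℕ} (z : Fin n → ℤ) (q : MvPolynomial (Fin n) ℝ) {β : Fin n →₀ ℕ}
    (hβ : β ∈ q.support) :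
    (∑ j, z j * (β j : ℤ)) ≤ (q.totalDegree : ℤ) * phiz z := by
  calc (∑ j, z j * (β j : ℤ)) ≤ ∑ j, phiz z * (β j : ℤ) := by
        refine Finset.sum_le_sum fun j _ => ?_
        exact mul_le_mul_of_nonneg_right (le_phiz z j) (Int.natCast_nonneg _)
    _ = phiz z * ∑ j, (β j : ℤ) := by rw [Finset.mul_sum]
    _ ≤ phiz z * (q.totalDegree : ℤ) := by
        refine mul_le_mul_of_nonneg_left ?_ (phiz_nonneg z)
        rw [sum_fin_eq_finsupp_sum]
        exact_mod_cast le_totalDegree hβ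
    _ = (q.totalDegree : ℤ) * phiz z := mul_comm _ _

lemma wdeg_le {n : ℕ} {d : ℕ} (z : Fin n → ℤ) {Bi : Set (Fin n → ℝ)}
    (hint : (interior Bi).Nonempty)
    (p q : MvPolynomial (Fin n) ℝ) (hq : q.totalDegree ≤ 2 * d)
    (hpq : ∀ l : ℝ, 1 ≤ l → ∀ b ∈ Bi,
      (eval (fun j => l ^ z j * b j) p) ^ 2 ≤ eval (fun j => l ^ z j * b j) q) :
    wdeg z p ≤ (((d : ℤ) * phiz z : ℤ) : WithBot ℤ) := by
  rcases eq_or_ne p 0 with rfl | hp0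
  · simp [wdeg]
  have hsupp : p.support.Nonempty := support_nonempty.mpr hp0
  obtain ⟨α₀, hα₀, hsup⟩ := Finset.exists_mem_eq_sup p.support hsupp
      (fun α => ((∑ j, z j * (α j : ℤ) : ℤ) : WithBot ℤ))
  set w : ℤ := ∑ j, z j * (α₀ j : ℤ) with hw
  rw [wdeg, hsup, WithBot.coe_le_coe]
  by_contra hcon
  push_neg at hcon
  have hWle : ∀ α ∈ p.support, (∑ j, z j * (α j : ℤ)) ≤ w := by
    intro α hα
    have h2 := Finset.le_sup (f := fun α => ((∑ j, z j * (α j : ℤ) : ℤ) : WithBot ℤ)) hα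
    rw [hsup] at h2
    exact WithBot.coe_le_coe.mp h2
  classical
  set P : MvPolynomial (Fin n) ℝ :=
    ∑ α ∈ p.support.filter (fun α => (∑ j, z j * (α j : ℤ)) = w), monomial α (coeff α p) with hP
  have hα₀f : α₀ ∈ p.support.filter (fun α => (∑ j, z j * (α j : ℤ)) = w) :=
    Finset.mem_filter.mpr ⟨hα₀, rfl⟩
  have hcoeffP : coeff α₀ P = coeff α₀ p := by
    rw [hP, coeff_sum]
    simp_rw [coeff_monomial]
    rw [Finset.sum_ite_eq', if_pos hα₀f]
  have hP0 : P ≠ 0 := fun h => (mem_support_iff.mp hα₀) (by rw [← hcoeffP, h, coeff_zero])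
  obtain ⟨b, hbU, hbP⟩ := exists_eval_ne_zero_of_ne_zero P hP0 isOpen_interior hint
  have hbB : b ∈ Bi := interior_subset hbU
  set c : (Fin n →₀ ℕ) → ℝ := fun α => coeff α p * ∏ j, b j ^ α j with hc
  set L : ℝ := eval b P with hL
  have hLval : L = ∑ α ∈ p.support, if (∑ j, z j * (α j : ℤ)) = w then c α else 0 := by
    rw [hL, hP, map_sum, ← Finset.sum_filter]
    refine Finset.sum_congr rfl fun α _ => ?_
    rw [eval_monomial, hc]
    congr 1
    rw [Finsupp.prod_fintype]
    intro j; rfl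
  have hg : Tendsto (fun l : ℝ => ∑ α ∈ p.support, c α * l ^ ((∑ j, z j * (α j : ℤ)) - w))
      atTop (𝓝 L) := by
    rw [hLval]
    exact tendsto_sum_zpow p.support c _ w hWle
  have hg2 : Tendsto (fun l : ℝ =>
      (∑ α ∈ p.support, c α * l ^ ((∑ j, z j * (α j : ℤ)) - w)) ^ 2) atTop (𝓝 (L ^ 2)) :=
    hg.pow 2
  set K : ℝ := ∑ β ∈ q.support, |coeff β q * ∏ j, b j ^ β j| with hK
  set E : ℤ := 2 * ((d : ℤ) * phiz z) with hE
  have hqbound : ∀ l : ℝ, 1 ≤ l →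
      eval (fun j => l ^ z j * b j) q ≤ K * l ^ E := by
    intro l hl
    have hl0 : (0:ℝ) < l := lt_of_lt_of_le one_pos hl
    rw [eval_ray z b q hl0, hK, Finset.sum_mul]
    refine Finset.sum_le_sum fun β hβ => ?_
    have h1 : (∑ j, z j * (β j : ℤ)) ≤ E := by
      refine le_trans (wexp_le z q hβ) ?_
      have := mul_le_mul_of_nonneg_right (Int.ofNat_le.mpr hq) (phiz_nonneg z)
      rw [hE]; push_cast at this ⊢; linarith
    calc coeff β q * (∏ j, b j ^ β j) * l ^ (∑ j, z j * (β j : ℤ))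
        ≤ |coeff β q * ∏ j, b j ^ β j| * l ^ (∑ j, z j * (β j : ℤ)) := by
          exact mul_le_mul_of_nonneg_right (le_abs_self _) (le_of_lt (zpow_pos hl0 _))
      _ ≤ |coeff β q * ∏ j, b j ^ β j| * l ^ E := by
          exact mul_le_mul_of_nonneg_left (zpow_le_zpow_right₀ hl h1) (abs_nonneg _)
  have hchain : ∀ᶠ l : ℝ in atTop,
      (∑ α ∈ p.support, c α * l ^ ((∑ j, z j * (α j : ℤ)) - w)) ^ 2 ≤ K * l ^ (E - 2 * w) := by
    filter_upwards [eventually_ge_atTop (1:ℝ)] with l hl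
    have hl0 : (0:ℝ) < l := lt_of_lt_of_le one_pos hl
    have hne : (l:ℝ) ≠ 0 := ne_of_gt hl0
    have hgf : (∑ α ∈ p.support, c α * l ^ ((∑ j, z j * (α j : ℤ)) - w))
        = (eval (fun j => l ^ z j * b j) p) / l ^ w := by
      rw [eval_ray z b p hl0, Finset.sum_div]
      refine Finset.sum_congr rfl fun α _ => ?_
      rw [zpow_sub₀ hne, mul_div_assoc]
    have hp2 : (l ^ w) ^ 2 = l ^ (w * 2) := by
      rw [← zpow_natCast (l ^ w) 2, ← zpow_mul]; norm_num
    rw [hgf, div_pow, hp2]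
    have hfq := hpq l hl b hbB
    have hq2 := hqbound l hl
    have hpos : (0:ℝ) < l ^ (w * 2) := zpow_pos hl0 _
    rw [div_le_iff₀ hpos]
    calc (eval (fun j => l ^ z j * b j) p) ^ 2
        ≤ eval (fun j => l ^ z j * b j) q := hfq
      _ ≤ K * l ^ E := hq2
      _ = K * l ^ (E - 2 * w) * l ^ (w * 2) := by
          rw [mul_assoc, ← zpow_add₀ hne]; ring_nf
  have hzero : Tendsto (fun l : ℝ => K * l ^ (E - 2 * w)) atTop (𝓝 0) := by
    have hneg : E - 2 * w < 0 := by
      rw [hE]; linarith [hcon]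
    simpa using (tendsto_zpow_atTop_zero hneg).const_mul K
  have hfinal : L ^ 2 ≤ 0 := le_of_tendsto_of_tendsto hg2 hzero hchain
  have : (0:ℝ) < L ^ 2 := by rw [← sq_abs]; exact pow_pos (abs_pos.mpr hbP) 2
  linarith

lemma tentacle_bound {n d : ℕ} (z : Fin n → ℤ) {Bi : Set (Fin n → ℝ)} (hcpt : IsCompact Bi)
    (hne : Bi.Nonempty) (hBne : ∀ b ∈ Bi, ∀ j, b j ≠ 0)
    (p : MvPolynomial (Fin n) ℝ) (hdeg : wdeg z p ≤ (((d : ℤ) * phiz z : ℤ) : WithBot ℤ)) :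
    ∃ C : ℝ, ∀ l : ℝ, 1 ≤ l → ∀ b ∈ Bi,
      (eval (fun j => l ^ z j * b j) p) ^ 2 ≤ C * (1 + ∑ j, (l ^ z j * b j) ^ 2) ^ d := by
  classical
  set f : (Fin n → ℝ) → ℝ := fun b => ∑ α ∈ p.support, |coeff α p| * ∏ j, |b j| ^ α j with hf
  have hfc : Continuous f :=
    continuous_finset_sum _ fun α _ => continuous_const.mul
      (continuous_finset_prod _ fun j _ => ((continuous_apply j).abs.pow _))
  obtain ⟨M, hM⟩ := hcpt.exists_bound_of_continuousOn hfc.continuousOn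
  set M' : ℝ := max M 0 with hM'
  have hfM : ∀ b ∈ Bi, f b ≤ M' := fun b hb =>
    le_trans (le_trans (le_abs_self _) (hM b hb)) (le_max_left _ _)
  have hWle : ∀ α ∈ p.support, (∑ j, z j * (α j : ℤ)) ≤ (d : ℤ) * phiz z := by
    intro α hα
    have h2 := Finset.le_sup (f := fun α => ((∑ j, z j * (α j : ℤ) : ℤ) : WithBot ℤ)) hα
    exact WithBot.coe_le_coe.mp (le_trans h2 hdeg)
  have habs : ∀ l : ℝ, 1 ≤ l → ∀ b ∈ Bi,
      (eval (fun j => l ^ z j * b j) p) ^ 2 ≤ M' ^ 2 * (l ^ ((d : ℤ) * phiz z)) ^ 2 := by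
    intro l hl b hb
    have hl0 : (0:ℝ) < l := lt_of_lt_of_le one_pos hl
    have hA0 : (0:ℝ) ≤ l ^ ((d : ℤ) * phiz z) := le_of_lt (zpow_pos hl0 _)
    have h1 : |eval (fun j => l ^ z j * b j) p| ≤ f b * l ^ ((d : ℤ) * phiz z) := by
      rw [eval_ray z b p hl0, hf, Finset.sum_mul]
      refine le_trans (Finset.abs_sum_le_sum_abs _ _) (Finset.sum_le_sum fun α hα => ?_)
      rw [abs_mul, abs_mul, Finset.abs_prod]
      simp_rw [abs_pow]
      rw [abs_of_pos (zpow_pos hl0 _)]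
      exact mul_le_mul_of_nonneg_left (zpow_le_zpow_right₀ hl (hWle α hα))
        (mul_nonneg (abs_nonneg _) (Finset.prod_nonneg fun j _ => pow_nonneg (abs_nonneg _) _))
    have h2 : |eval (fun j => l ^ z j * b j) p| ≤ M' * l ^ ((d : ℤ) * phiz z) :=
      le_trans h1 (mul_le_mul_of_nonneg_right (hfM b hb) hA0)
    calc (eval (fun j => l ^ z j * b j) p) ^ 2
        = |eval (fun j => l ^ z j * b j) p| ^ 2 := (sq_abs _).symm
      _ ≤ (M' * l ^ ((d : ℤ) * phiz z)) ^ 2 := pow_le_pow_left₀ (abs_nonneg _) h2 2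
      _ = M' ^ 2 * (l ^ ((d : ℤ) * phiz z)) ^ 2 := mul_pow _ _ _
  have hbase1 : ∀ l : ℝ, 1 ≤ l → ∀ b : Fin n → ℝ,
      (1:ℝ) ≤ 1 + ∑ j, (l ^ z j * b j) ^ 2 := by
    intro l hl b
    nlinarith [Finset.sum_nonneg (s := Finset.univ)
      (fun j (_ : j ∈ Finset.univ) => sq_nonneg (l ^ z j * b j))]
  by_cases hφ : phiz z = 0
  · refine ⟨M' ^ 2, fun l hl b hb => ?_⟩
    have h3 := habs l hl b hb
    rw [hφ] at h3
    simp only [mul_zero, zpow_zero, one_pow, mul_one] at h3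
    calc (eval (fun j => l ^ z j * b j) p) ^ 2 ≤ M' ^ 2 := h3
      _ ≤ M' ^ 2 * (1 + ∑ j, (l ^ z j * b j) ^ 2) ^ d := by
          have h4 : (1:ℝ) ≤ (1 + ∑ j, (l ^ z j * b j) ^ 2) ^ d :=
            one_le_pow₀ (hbase1 l hl b)
          nlinarith [sq_nonneg M']
  · have hsupne : (Finset.univ : Finset (Fin n)).Nonempty := by
      rcases (Finset.univ : Finset (Fin n)).eq_empty_or_nonempty with h | h
      · refine absurd ?_ hφ
        simp only [phiz]
        rw [h, Finset.sup_empty]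
        rfl
      · exact h
    obtain ⟨j₀, _, hj₀⟩ := Finset.exists_mem_eq_sup Finset.univ hsupne (fun j => (z j).toNat)
    have htn : (z j₀).toNat ≠ 0 := by
      intro h
      refine hφ ?_
      simp only [phiz]
      rw [hj₀, h]
      rfl
    have hzj₀ : z j₀ = phiz z := by
      simp only [phiz]
      rw [hj₀]
      omega
    obtain ⟨b₀, hb₀, hminOn⟩ := hcpt.exists_isMinOn hne
      (Continuous.continuousOn (f := fun b : Fin n → ℝ => (b j₀) ^ 2)
        ((continuous_apply j₀).pow 2))
    set ε : ℝ := (b₀ j₀) ^ 2 with hε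
    have hε0 : 0 < ε := by
      rw [hε, ← sq_abs]; exact pow_pos (abs_pos.mpr (hBne b₀ hb₀ j₀)) 2
    have hεle : ∀ b ∈ Bi, ε ≤ (b j₀) ^ 2 := fun b hb => isMinOn_iff.mp hminOn b hb
    refine ⟨M' ^ 2 / ε ^ d, fun l hl b hb => ?_⟩
    have hl0 : (0:ℝ) < l := lt_of_lt_of_le one_pos hl
    have h3 := habs l hl b hb
    set A : ℝ := l ^ ((d : ℤ) * phiz z) with hA
    have hA0 : (0:ℝ) < A := zpow_pos hl0 _
    have hterm : ε * l ^ (2 * phiz z) ≤ 1 + ∑ j, (l ^ z j * b j) ^ 2 := by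
      have h5 : (l ^ z j₀ * b j₀) ^ 2 ≤ ∑ j, (l ^ z j * b j) ^ 2 :=
        Finset.single_le_sum (f := fun j => (l ^ z j * b j) ^ 2)
          (fun j _ => sq_nonneg _) (Finset.mem_univ j₀)
      have h6 : ε * l ^ (2 * phiz z) ≤ (l ^ z j₀ * b j₀) ^ 2 := by
        rw [mul_pow]
        have he : (l ^ z j₀) ^ 2 = l ^ (2 * phiz z) := by
          rw [← zpow_natCast (l ^ z j₀) 2, ← zpow_mul, hzj₀]
          congr 1
          push_cast; ring
        rw [he]
        have h7 := hεle b hb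
        nlinarith [zpow_pos hl0 (2 * phiz z)]
      linarith
    have hpow : ε ^ d * A ^ 2 ≤ (1 + ∑ j, (l ^ z j * b j) ^ 2) ^ d := by
      have h7 : (ε * l ^ (2 * phiz z)) ^ d ≤ (1 + ∑ j, (l ^ z j * b j) ^ 2) ^ d :=
        pow_le_pow_left₀ (by positivity) hterm d
      have h8 : (ε * l ^ (2 * phiz z)) ^ d = ε ^ d * A ^ 2 := by
        rw [mul_pow, hA]
        congr 1
        rw [← zpow_natCast (l ^ (2 * phiz z)) d, ← zpow_mul,
          ← zpow_natCast (l ^ ((d : ℤ) * phiz z)) 2, ← zpow_mul]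
        congr 1
        push_cast; ring
      rw [← h8]; exact h7
    have h9 : M' ^ 2 / ε ^ d * (ε ^ d * A ^ 2)
        ≤ M' ^ 2 / ε ^ d * ((1 + ∑ j, (l ^ z j * b j) ^ 2) ^ d) :=
      mul_le_mul_of_nonneg_left hpow (by positivity)
    have h10 : M' ^ 2 / ε ^ d * (ε ^ d * A ^ 2) = M' ^ 2 * A ^ 2 := by
      field_simp
    linarith

theorem Bd_of_tentacles (n m : ℕ) (z : Fin m → Fin n → ℤ)
    (B : Fin m → Set (Fin n → ℝ))
    (hBcpt : ∀ i, IsCompact (B i))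
    (hBsa : ∀ i, IsSemialgebraic (B i))
    (hBint : ∀ i, (interior (B i)).Nonempty)
    (hBne : ∀ i, ∀ b ∈ B i, ∀ j, b j ≠ 0)
    (S : Set (Fin n → ℝ))
    (hS : S = ⋃ i, {a | ∃ l : ℝ, 1 ≤ l ∧ ∃ b ∈ B i, a = fun j => l ^ (z i j) * b j})
    (d : ℕ) :
    Bset n d S =
      {p : MvPolynomial (Fin n) ℝ |
        ∀ i, wdeg (z i) p ≤ (((d : ℤ) * phiz (z i) : ℤ) : WithBot ℤ)} ∧
    ∀ p ∈ Bset n d S,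
      p ∈ Submodule.span ℝ
        (Bset n d S ∩ {q | ∃ (α : Fin n →₀ ℕ) (c : ℝ), q = monomial α c}) := by
  classical
  have heq : Bset n d S =
      {p : MvPolynomial (Fin n) ℝ |
        ∀ i, wdeg (z i) p ≤ (((d : ℤ) * phiz (z i) : ℤ) : WithBot ℤ)} := by
    ext p
    constructor
    · rintro ⟨q, hq, hpq⟩ i
      refine wdeg_le (z i) (hBint i) p q hq ?_
      intro l hl b hb
      refine hpq _ ?_
      rw [hS]
      exact Set.mem_iUnion.mpr ⟨i, ⟨l, hl, b, hb, rfl⟩⟩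
    · intro hp
      have hCk : ∀ i : Fin m, ∃ C : ℝ, ∀ l : ℝ, 1 ≤ l → ∀ b ∈ B i,
          (eval (fun j => l ^ z i j * b j) p) ^ 2
            ≤ C * (1 + ∑ j, (l ^ z i j * b j) ^ 2) ^ d := by
        intro i
        obtain ⟨x, hx⟩ := hBint i
        exact tentacle_bound (z i) (hBcpt i) ⟨x, interior_subset hx⟩ (hBne i) p (hp i)
      choose C hC using hCk
      set C' : ℝ := ∑ i, max (C i) 0 with hC'
      have hCle : ∀ i, C i ≤ C' := by
        intro i
        calc C i ≤ max (C i) 0 := le_max_left _ _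
          _ ≤ C' := Finset.single_le_sum
              (f := fun i => max (C i) 0) (fun i _ => le_max_right _ _) (Finset.mem_univ i)
      refine ⟨C' • ((1 : MvPolynomial (Fin n) ℝ) + ∑ j, X j ^ 2) ^ d, ?_, ?_⟩
      · refine le_trans (totalDegree_smul_le _ _) (le_trans (totalDegree_pow _ _) ?_)
        have h1 : ((1 : MvPolynomial (Fin n) ℝ) + ∑ j, X j ^ 2).totalDegree ≤ 2 := by
          refine le_trans (totalDegree_add _ _) (max_le ?_ ?_)
          · simp [totalDegree_one]
          · refine le_trans (totalDegree_finset_sum _ _) ?_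
            refine Finset.sup_le fun j _ => ?_
            rw [totalDegree_X_pow]
        calc d * ((1 : MvPolynomial (Fin n) ℝ) + ∑ j, X j ^ 2).totalDegree
            ≤ d * 2 := Nat.mul_le_mul_left d h1
          _ = 2 * d := Nat.mul_comm d 2
      · intro a ha
        rw [hS] at ha
        obtain ⟨i, l, hl, b, hb, rfl⟩ := Set.mem_iUnion.mp ha
        have heval : eval (fun j => l ^ z i j * b j)
            (C' • ((1 : MvPolynomial (Fin n) ℝ) + ∑ j, X j ^ 2) ^ d)
            = C' * (1 + ∑ j, (l ^ z i j * b j) ^ 2) ^ d := by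
          rw [smul_eq_C_mul, map_mul, eval_C, map_pow, map_add, map_one, map_sum]
          simp
        rw [heval]
        refine le_trans (hC i l hl b hb) ?_
        have hT : (0:ℝ) ≤ (1 + ∑ j, (l ^ z i j * b j) ^ 2) ^ d := by positivity
        exact mul_le_mul_of_nonneg_right (hCle i) hT
  refine ⟨heq, fun p hp => ?_⟩
  rw [heq] at hp
  have hrep : p = ∑ α ∈ p.support, monomial α (coeff α p) :=
    (support_sum_monomial_coeff p).symm
  rw [hrep]
  refine Submodule.sum_mem _ fun α hα => ?_
  refine Submodule.subset_span ⟨?_, α, coeff α p, rfl⟩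
  rw [heq]
  intro i
  refine le_trans ?_ (hp i)
  rw [wdeg, wdeg]
  refine Finset.sup_mono ?_
  intro β hβ
  rw [support_monomial] at hβ
  rcases eq_or_ne (coeff α p) 0 with h0 | h0
  · rw [if_pos h0] at hβ; exact absurd hβ (Finset.notMem_empty β)
  · rw [if_neg h0] at hβ
    rw [Finset.mem_singleton] at hβ
    subst hβ
    exact hα
end

section
/- If S ⊆ ℝⁿ is a finite union of standard tentacles, then the graded algebra B(S) = ⊕_{d≥0} B_d(S), viewed as the subalgebra of ℝ[x₁,…,xₙ,t] spanned by the monomials x^α t^d with p = x^α ∈ B_d(S), is a finitely generated ℝ-algebra. -/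
open MvPolynomial

/-- The monomials `x^α t^d` in `ℝ[x₁,…,xₙ,t]` with `x^α ∈ B_d(S)`; their span is `B(S)`. -/
noncomputable def BMonomials (n : ℕ) (S : Set (Fin n → ℝ)) :
    Set (MvPolynomial (Fin (n + 1)) ℝ) :=
  {f | ∃ (d : ℕ) (α : Fin n →₀ ℕ), (monomial α (1 : ℝ)) ∈ Bset n d S ∧
    f = monomial (Finsupp.equivFunOnFinite.symm (Fin.snoc (fun j => α j) d)) (1 : ℝ)}

/-!
Along the `i`-th tentacle the monomial `x^α` has size `≍ λ^{z⁽ⁱ⁾·α}`, while a polynomial of degree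
`2d` is `O(λ^{2dφᵢ})` with `φᵢ = max(0, maxⱼ zᵢⱼ)`, and the globally nonnegative polynomial
`C·x_k^{2d}`, for a coordinate `k` realising `φᵢ`, attains that rate (compactness of `Bᵢ` and
`b_k ≠ 0` bound the constants). Hence `x^α ∈ B_d(S)` iff `z⁽ⁱ⁾·α ≤ dφᵢ` for all `i`, so the
exponents `(α, d)` of `B(S)` form the monoid cut out by finitely many homogeneous integer
inequalities. With slack variables this monoid is the projection of the monoid of `ℕ`-solutions
of a linear system, which is finitely generated (Gordan's lemma), and the monomials of its
generators generate `B(S)`.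
-/

section Gordan

variable {M : Type*} [AddCommMonoid M] [PartialOrder M] [WellQuasiOrderedLE M]
  [IsOrderedCancelAddMonoid M] [CanonicallyOrderedAdd M] {ι : Type*} [Finite ι]

theorem AddSubmonoid.exists_fg_coe_eq_setOf_nonpos (h : M →+ (ι → ℤ)) :
    ∃ P : AddSubmonoid M, P.FG ∧ (P : Set M) = {x | h x ≤ 0} := by
  let slack : M × (ι → ℕ) →+ (ι → ℤ) := h.comp (AddMonoidHom.fst M _) +
    ((Nat.castAddMonoidHom ℤ).compLeft ι).comp (AddMonoidHom.snd M _)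
  refine ⟨(slack.eqLocusM 0).map (AddMonoidHom.fst M _),
    (AddSubmonoid.fg_eqLocusM slack 0).map _, Set.ext fun x => ⟨?_, fun hx => ?_⟩⟩
  · rintro ⟨⟨x, s⟩, hxs, rfl⟩ i
    have hi : h x i + s i = 0 := congrFun hxs i
    show h x i ≤ 0
    omega
  · refine ⟨(x, fun i => (-h x i).toNat), funext fun i => ?_, rfl⟩
    have hi : h x i ≤ 0 := hx i
    show h x i + ((-h x i).toNat : ℤ) = 0
    omega

end Gordan

theorem Finset.prod_zpow_eq_zpow_sum₀ {ι G₀ : Type*} [CommGroupWithZero G₀] {a : G₀} (ha : a ≠ 0)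
    (s : Finset ι) (f : ι → ℤ) : ∏ i ∈ s, a ^ f i = a ^ ∑ i ∈ s, f i := by
  induction s using Finset.cons_induction with
  | empty => simp
  | cons i s hi ih => rw [prod_cons, sum_cons, zpow_add₀ ha, ih]

theorem le_of_forall_one_le_mul_zpow_le {K C : ℝ} (hK : 0 < K) {a b : ℤ}
    (h : ∀ l : ℝ, 1 ≤ l → K * l ^ a ≤ C * l ^ b) : a ≤ b := by
  by_contra! hba
  set l := max 1 (C / K) + 1
  have hl : 1 ≤ l := by linarith [le_max_left 1 (C / K)]
  have hl0 : 0 < l := by linarith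
  have hCl : C < K * l := by
    rw [← div_lt_iff₀' hK]
    linarith [le_max_right 1 (C / K)]
  have hgrow : l ≤ l ^ (a - b) := by
    simpa using zpow_le_zpow_right₀ hl (show 1 ≤ a - b by omega)
  have hbound : K * l ^ (a - b) ≤ C := by
    have := h l hl
    rw [← sub_add_cancel a b, zpow_add₀ hl0.ne', ← mul_assoc] at this
    exact le_of_mul_le_mul_right this (zpow_pos hl0 b)
  exact hCl.not_ge ((mul_le_mul_of_nonneg_left hgrow hK.le).trans hbound)

namespace MvPolynomial

section Adjoin

variable {R σ : Type*} [CommSemiring R]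

theorem coe_closure_image_monomial_one (s : Set (σ →₀ ℕ)) :
    (Submonoid.closure ((fun μ => monomial μ (1 : R)) '' s) : Set (MvPolynomial σ R)) =
      (fun μ => monomial μ (1 : R)) '' AddSubmonoid.closure s := by
  have hcomp (t : Set (σ →₀ ℕ)) : (fun μ => monomial μ (1 : R)) '' t =
      monomialOneHom R σ '' (Multiplicative.toAdd ⁻¹' t) := by
    rw [← Equiv.image_symm_eq_preimage, Set.image_image]
    rfl
  rw [hcomp, hcomp, ← MonoidHom.map_mclosure, ← AddSubmonoid.toSubmonoid_closure]
  rfl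

theorem exists_finset_adjoin_eq_span_monomial {P : AddSubmonoid (σ →₀ ℕ)} (hP : P.FG) :
    ∃ s : Finset (MvPolynomial σ R),
      (Algebra.adjoin R (s : Set (MvPolynomial σ R)) : Set (MvPolynomial σ R)) =
        Submodule.span R ((fun μ => monomial μ (1 : R)) '' (P : Set (σ →₀ ℕ))) := by
  classical
  obtain ⟨G, rfl⟩ := hP
  refine ⟨G.image fun μ => monomial μ 1, ?_⟩
  rw [← Subalgebra.coe_toSubmodule, Algebra.adjoin_eq_span, Finset.coe_image,
    coe_closure_image_monomial_one]

end Adjoin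

section Eval

variable {σ : Type*} [Fintype σ]

theorem eval_monomial_zpow_mul {K : Type*} [Field K] {l : K} (hl : l ≠ 0)
    (c : σ → ℤ) (b : σ → K) (β : σ →₀ ℕ) (a : K) :
    eval (fun j => l ^ c j * b j) (monomial β a) =
      l ^ (∑ j, c j * β j) * eval b (monomial β a) := by
  have hpow (j : σ) : (l ^ c j * b j) ^ β j = l ^ (c j * β j) * b j ^ β j := by
    rw [mul_pow, zpow_mul, zpow_natCast]
  simp only [eval_monomial, Finsupp.prod_fintype _ _ (fun _ => pow_zero _), hpow,
    Finset.prod_mul_distrib, Finset.prod_zpow_eq_zpow_sum₀ hl]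
  ring

theorem sq_eval_monomial_zpow_mul {K : Type*} [Field K] {l : K} (hl : l ≠ 0)
    (c : σ → ℤ) (b : σ → K) (α : σ →₀ ℕ) :
    eval (fun j => l ^ c j * b j) (monomial α 1) ^ 2 =
      l ^ (2 * ∑ j, c j * α j) * eval b (monomial α 1) ^ 2 := by
  rw [eval_monomial_zpow_mul hl, mul_pow, ← zpow_natCast, ← zpow_mul, mul_comm (2 : ℤ)]
  rfl

end Eval

end MvPolynomial

def tentacle {σ : Type*} (c : σ → ℤ) (B : Set (σ → ℝ)) : Set (σ → ℝ) :=
  {a | ∃ l : ℝ, 1 ≤ l ∧ ∃ b ∈ B, a = fun j => l ^ c j * b j}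

section Tentacle

variable {σ : Type*} [Fintype σ]

def tentacleGrowth (c : σ → ℤ) : ℕ :=
  Finset.univ.sup fun j => (c j).toNat

theorem le_tentacleGrowth (c : σ → ℤ) (j : σ) : c j ≤ tentacleGrowth c := by
  have : (c j).toNat ≤ tentacleGrowth c :=
    Finset.le_sup (f := fun j => (c j).toNat) (Finset.mem_univ j)
  omega

theorem exists_eq_tentacleGrowth {c : σ → ℤ} (h : tentacleGrowth c ≠ 0) :
    ∃ k, c k = tentacleGrowth c := by
  have hne : (Finset.univ : Finset σ).Nonempty := by
    by_contra he
    simp [tentacleGrowth, Finset.not_nonempty_iff_eq_empty.mp he] at h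
  obtain ⟨k, -, hk⟩ := Finset.exists_mem_eq_sup _ hne fun j => (c j).toNat
  exact ⟨k, by rw [tentacleGrowth, hk] at h ⊢; omega⟩

theorem exists_eval_le_mul_zpow_tentacleGrowth (c : σ → ℤ) (b : σ → ℝ)
    {q : MvPolynomial σ ℝ} {N : ℕ} (hq : q.totalDegree ≤ N) :
    ∃ C : ℝ, ∀ l : ℝ, 1 ≤ l →
      eval (fun j => l ^ c j * b j) q ≤ C * l ^ ((N : ℤ) * tentacleGrowth c) := by
  refine ⟨∑ β ∈ q.support, |eval b (monomial β (coeff β q))|, fun l hl => ?_⟩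
  conv_lhs => rw [q.as_sum]
  rw [map_sum, Finset.sum_mul]
  refine Finset.sum_le_sum fun β hβ => ?_
  have hdeg : ∑ j, (β j : ℤ) ≤ N := by
    have := (le_totalDegree hβ).trans hq
    rw [Finsupp.sum_fintype _ _ fun _ => rfl] at this
    exact_mod_cast this
  have hexp : ∑ j, c j * β j ≤ (N : ℤ) * tentacleGrowth c := calc
    ∑ j, c j * β j ≤ ∑ j, (tentacleGrowth c : ℤ) * β j :=
      Finset.sum_le_sum fun j _ =>
        mul_le_mul_of_nonneg_right (le_tentacleGrowth c j) (by positivity)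
    _ = (tentacleGrowth c : ℤ) * ∑ j, (β j : ℤ) := by rw [Finset.mul_sum]
    _ ≤ (N : ℤ) * tentacleGrowth c := by rw [mul_comm]; gcongr
  rw [eval_monomial_zpow_mul (by positivity)]
  calc l ^ (∑ j, c j * β j) * eval b (monomial β (coeff β q))
      ≤ l ^ (∑ j, c j * β j) * |eval b (monomial β (coeff β q))| := by
        gcongr; exact le_abs_self _
    _ ≤ l ^ ((N : ℤ) * tentacleGrowth c) * |eval b (monomial β (coeff β q))| := by gcongr
    _ = _ := mul_comm _ _

theorem le_tentacleGrowth_of_forall_sq_le (c : σ → ℤ) {b : σ → ℝ} (hb : ∀ j, b j ≠ 0)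
    {α : σ →₀ ℕ} {q : MvPolynomial σ ℝ} {d : ℕ} (hq : q.totalDegree ≤ 2 * d)
    (h : ∀ l : ℝ, 1 ≤ l →
      eval (fun j => l ^ c j * b j) (monomial α 1) ^ 2 ≤ eval (fun j => l ^ c j * b j) q) :
    ∑ j, c j * α j ≤ d * tentacleGrowth c := by
  obtain ⟨C, hC⟩ := exists_eval_le_mul_zpow_tentacleGrowth c b hq
  have hb' : eval b (monomial α 1) ≠ 0 := by
    rw [eval_monomial, one_mul, Finsupp.prod_fintype _ _ fun _ => pow_zero _]
    exact Finset.prod_ne_zero_iff.mpr fun j _ => pow_ne_zero _ (hb j)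
  have := le_of_forall_one_le_mul_zpow_le (by positivity) fun l hl => calc
    eval b (monomial α 1) ^ 2 * l ^ (2 * ∑ j, c j * α j)
        = eval (fun j => l ^ c j * b j) (monomial α 1) ^ 2 := by
          rw [sq_eval_monomial_zpow_mul (by positivity), mul_comm]
    _ ≤ eval (fun j => l ^ c j * b j) q := h l hl
    _ ≤ C * l ^ (((2 * d : ℕ) : ℤ) * tentacleGrowth c) := hC l hl
  push_cast at this
  linarith

theorem exists_nonneg_zpow_tentacleGrowth_le_eval {B : Set (σ → ℝ)} (hB : IsCompact B)
    (hB0 : ∀ b ∈ B, ∀ j, b j ≠ 0) (c : σ → ℤ) (d : ℕ) :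
    ∃ q : MvPolynomial σ ℝ, q.totalDegree ≤ 2 * d ∧ (∀ a, 0 ≤ eval a q) ∧
      ∀ l : ℝ, 1 ≤ l → ∀ b ∈ B,
        l ^ (2 * d * tentacleGrowth c : ℤ) ≤ eval (fun j => l ^ c j * b j) q := by
  by_cases hφ : tentacleGrowth c = 0
  · exact ⟨1, by simp, fun _ => by simp, fun l _ b _ => by simp [hφ]⟩
  obtain ⟨k, hk⟩ := exists_eq_tentacleGrowth hφ
  have hcont : ContinuousOn (fun b : σ → ℝ => (b k ^ (2 * d))⁻¹) B :=
    ((continuous_apply k).pow _).continuousOn.inv₀ fun b hb => pow_ne_zero _ (hB0 b hb k)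
  obtain ⟨E, hE0, hE⟩ := (bddAbove_iff_exists_ge 0).mp (hB.bddAbove_image hcont)
  refine ⟨C E * X k ^ (2 * d), ?_, fun a => ?_, fun l hl b hb => ?_⟩
  · exact (totalDegree_mul _ _).trans (by rw [totalDegree_C, totalDegree_X_pow, zero_add])
  · simp only [eval_mul, eval_C, eval_pow, eval_X]
    exact mul_nonneg hE0 ((even_two_mul d).pow_nonneg _)
  · have hEb : 1 ≤ E * b k ^ (2 * d) :=
      (inv_le_iff_one_le_mul₀ ((even_two_mul d).pow_pos (hB0 b hb k))).mp (hE _ ⟨b, hb, rfl⟩)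
    have hexp : c k * ((2 * d : ℕ) : ℤ) = 2 * d * tentacleGrowth c := by
      rw [hk]; push_cast; ring
    calc l ^ (2 * d * tentacleGrowth c : ℤ)
        ≤ l ^ (2 * d * tentacleGrowth c : ℤ) * (E * b k ^ (2 * d)) :=
          le_mul_of_one_le_right (by positivity) hEb
      _ = E * (l ^ c k * b k) ^ (2 * d) := by
          rw [mul_pow, ← zpow_natCast (l ^ c k), ← zpow_mul, hexp]
          ring
      _ = eval (fun j => l ^ c j * b j) (C E * X k ^ (2 * d)) := by
          simp only [eval_mul, eval_C, eval_pow, eval_X]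

theorem exists_nonneg_sq_eval_monomial_le_on_tentacle {B : Set (σ → ℝ)} (hB : IsCompact B)
    (hB0 : ∀ b ∈ B, ∀ j, b j ≠ 0) {c : σ → ℤ} {d : ℕ} {α : σ →₀ ℕ}
    (h : ∑ j, c j * α j ≤ d * tentacleGrowth c) :
    ∃ q : MvPolynomial σ ℝ, q.totalDegree ≤ 2 * d ∧ (∀ a, 0 ≤ eval a q) ∧
      ∀ a ∈ tentacle c B, eval a (monomial α 1) ^ 2 ≤ eval a q := by
  obtain ⟨q, hdeg, hnn, hgrow⟩ := exists_nonneg_zpow_tentacleGrowth_le_eval hB hB0 c d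
  obtain ⟨D, hD0, hD⟩ := (bddAbove_iff_exists_ge 0).mp
    (hB.bddAbove_image (f := fun b => eval b (monomial α (1 : ℝ)) ^ 2)
      ((continuous_eval _).pow 2).continuousOn)
  refine ⟨C D * q, (totalDegree_mul _ _).trans (by rw [totalDegree_C, zero_add]; exact hdeg),
    fun a => ?_, ?_⟩
  · simp only [eval_mul, eval_C]
    exact mul_nonneg hD0 (hnn a)
  rintro _ ⟨l, hl, b, hb, rfl⟩
  rw [sq_eval_monomial_zpow_mul (by positivity), eval_mul, eval_C]
  calc l ^ (2 * ∑ j, c j * α j) * eval b (monomial α 1) ^ 2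
      ≤ l ^ (2 * d * tentacleGrowth c : ℤ) * D :=
        mul_le_mul (zpow_le_zpow_right₀ hl (by linarith)) (hD _ ⟨b, hb, rfl⟩)
          (sq_nonneg _) (by positivity)
    _ ≤ D * eval (fun j => l ^ c j * b j) q := by
        rw [mul_comm]
        gcongr
        exact hgrow l hl b hb

end Tentacle

theorem mem_Bset_iUnion {n d : ℕ} {ι : Type*} [Fintype ι] {S : ι → Set (Fin n → ℝ)}
    {p : MvPolynomial (Fin n) ℝ}
    (h : ∀ i, ∃ q : MvPolynomial (Fin n) ℝ, q.totalDegree ≤ 2 * d ∧ (∀ a, 0 ≤ eval a q) ∧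
      ∀ a ∈ S i, eval a p ^ 2 ≤ eval a q) :
    p ∈ Bset n d (⋃ i, S i) := by
  choose q hdeg hnn hq using h
  refine ⟨∑ i, q i, (totalDegree_finsetSum _ _).trans (Finset.sup_le fun i _ => hdeg i), ?_⟩
  intro a ha
  obtain ⟨i, hi⟩ := Set.mem_iUnion.mp ha
  rw [map_sum]
  exact (hq i a hi).trans (Finset.single_le_sum (fun j _ => hnn j a) (Finset.mem_univ i))

theorem monomial_mem_Bset_iUnion_tentacle_iff {n : ℕ} {ι : Type*} [Fintype ι] (z : ι → Fin n → ℤ)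
    {B : ι → Set (Fin n → ℝ)} (hB : ∀ i, IsCompact (B i)) (hBne : ∀ i, (B i).Nonempty)
    (hB0 : ∀ i, ∀ b ∈ B i, ∀ j, b j ≠ 0) (d : ℕ) (α : Fin n →₀ ℕ) :
    monomial α 1 ∈ Bset n d (⋃ i, tentacle (z i) (B i)) ↔
      ∀ i, ∑ j, z i j * α j ≤ d * tentacleGrowth (z i) := by
  refine ⟨fun ⟨q, hdeg, hq⟩ i => ?_, fun h => mem_Bset_iUnion fun i =>
    exists_nonneg_sq_eval_monomial_le_on_tentacle (hB i) (hB0 i) (h i)⟩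
  obtain ⟨b, hb⟩ := hBne i
  exact le_tentacleGrowth_of_forall_sq_le (z i) (hB0 i b hb) hdeg fun l hl =>
    hq _ (Set.mem_iUnion.mpr ⟨i, l, hl, b, hb, rfl⟩)

theorem BMonomials_eq_image {n : ℕ} {S : Set (Fin n → ℝ)} {P : ℕ → (Fin n →₀ ℕ) → Prop}
    (h : ∀ d α, monomial α 1 ∈ Bset n d S ↔ P d α) :
    BMonomials n S = (fun μ => monomial μ (1 : ℝ)) ''
      {μ | P (μ (Fin.last n)) (Finsupp.equivFunOnFinite.symm (Fin.init μ))} := by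
  ext f
  constructor
  · rintro ⟨d, α, hα, rfl⟩
    refine ⟨_, ?_, rfl⟩
    simpa [Fin.init_snoc] using (h d α).mp hα
  · rintro ⟨μ, hμ, rfl⟩
    refine ⟨μ (Fin.last n), Finsupp.equivFunOnFinite.symm (Fin.init μ), (h _ _).mpr hμ, ?_⟩
    simp [Fin.snoc_init_self]

noncomputable def tentacleExponentForms {n : ℕ} {ι : Type*} (z : ι → Fin n → ℤ) :
    (Fin (n + 1) →₀ ℕ) →+ (ι → ℤ) :=
  AddMonoidHom.mk'
    (fun μ i => ∑ j, z i j * μ (Fin.castSucc j) - μ (Fin.last n) * tentacleGrowth (z i))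
    fun μ ν => by
      funext i
      simp only [Finsupp.coe_add, Pi.add_apply, Nat.cast_add, mul_add, Finset.sum_add_distrib]
      ring

theorem BS_finitely_generated_general (n m : ℕ) (z : Fin m → Fin n → ℤ)
    (B : Fin m → Set (Fin n → ℝ))
    (hBcpt : ∀ i, IsCompact (B i))
    (hBint : ∀ i, (interior (B i)).Nonempty)
    (hBne : ∀ i, ∀ b ∈ B i, ∀ j, b j ≠ 0)
    (S : Set (Fin n → ℝ))
    (hS : S = ⋃ i, {a | ∃ l : ℝ, 1 ≤ l ∧ ∃ b ∈ B i, a = fun j => l ^ (z i j) * b j}) :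
    ∃ s : Finset (MvPolynomial (Fin (n + 1)) ℝ),
      (Algebra.adjoin ℝ (↑s : Set (MvPolynomial (Fin (n + 1)) ℝ)) : Set (MvPolynomial (Fin (n + 1)) ℝ)) =
        ↑(Submodule.span ℝ (BMonomials n S)) := by
  obtain rfl : S = ⋃ i, tentacle (z i) (B i) := hS
  obtain ⟨P, hPfg, hP⟩ := AddSubmonoid.exists_fg_coe_eq_setOf_nonpos (tentacleExponentForms z)
  obtain ⟨s, hs⟩ := exists_finset_adjoin_eq_span_monomial (R := ℝ) hPfg
  refine ⟨s, ?_⟩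
  rw [hs, BMonomials_eq_image (monomial_mem_Bset_iUnion_tentacle_iff z hBcpt
    (fun i => (hBint i).mono interior_subset) hBne), hP]
  congr! 3 with μ
  simp [tentacleExponentForms, Pi.le_def, Fin.init]

theorem BS_finitely_generated (n m : ℕ) (z : Fin m → Fin n → ℤ)
    (B : Fin m → Set (Fin n → ℝ))
    (hBcpt : ∀ i, IsCompact (B i))
    (hBsa : ∀ i, IsSemialgebraic (B i))
    (hBint : ∀ i, (interior (B i)).Nonempty)
    (hBne : ∀ i, ∀ b ∈ B i, ∀ j, b j ≠ 0)
    (S : Set (Fin n → ℝ))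
    (hS : S = ⋃ i, {a | ∃ l : ℝ, 1 ≤ l ∧ ∃ b ∈ B i, a = fun j => l ^ (z i j) * b j}) :
    ∃ s : Finset (MvPolynomial (Fin (n + 1)) ℝ),
      (Algebra.adjoin ℝ (↑s : Set (MvPolynomial (Fin (n + 1)) ℝ)) : Set (MvPolynomial (Fin (n + 1)) ℝ)) =
        ↑(Submodule.span ℝ (BMonomials n S)) :=
  BS_finitely_generated_general n m z B hBcpt hBint hBne S hS
end

section
/- Let S ⊆ ℝⁿ with ‖a‖ ≥ 1 for all a ∈ S, and set S' := {(a,s) ∈ ℝ^{n+1} | a ∈ S, ‖a‖²s² ≤ 1}. If p ∈ B_d(S), then the polynomial p(x)·t^d ∈ ℝ[x₁,…,xₙ,t] is bounded on S', i.e., p·t^d ∈ B₀(S'). -/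
open MvPolynomial

lemma poly_growth_bound (n d : ℕ) (q : MvPolynomial (Fin n) ℝ) (hq : q.totalDegree ≤ 2 * d) :
    ∃ D : ℝ, 0 ≤ D ∧ ∀ a : Fin n → ℝ, 1 ≤ ∑ i, (a i) ^ 2 →
      |eval a q| ≤ D * (∑ i, (a i) ^ 2) ^ d := by
  refine ⟨∑ m ∈ q.support, |coeff m q|, by positivity, fun a ha => ?_⟩
  set S2 := ∑ i, (a i) ^ 2 with hS2
  have hS2nn : (0:ℝ) ≤ S2 := by positivity
  set r := Real.sqrt S2 with hr
  have hr1 : 1 ≤ r := by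
    rw [hr, show (1:ℝ) = Real.sqrt 1 by simp]
    exact Real.sqrt_le_sqrt ha
  have hr2 : r ^ 2 = S2 := Real.sq_sqrt hS2nn
  have key : ∀ m ∈ q.support, |coeff m q * ∏ i, a i ^ m i| ≤ |coeff m q| * S2 ^ d := by
    intro m hm
    rw [abs_mul]
    refine mul_le_mul_of_nonneg_left ?_ (abs_nonneg _)
    have h1 : |∏ i, a i ^ m i| = ∏ i, |a i| ^ m i := by
      rw [Finset.abs_prod]; simp [abs_pow]
    rw [h1]
    have h2 : ∀ i : Fin n, |a i| ≤ r := by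
      intro i
      have : (a i) ^ 2 ≤ S2 := Finset.single_le_sum (f := fun i => (a i)^2)
        (fun j _ => by positivity) (Finset.mem_univ i)
      calc |a i| = Real.sqrt ((a i)^2) := (Real.sqrt_sq_eq_abs _).symm
        _ ≤ r := Real.sqrt_le_sqrt this
    calc ∏ i, |a i| ^ m i ≤ ∏ i, r ^ m i := by
          refine Finset.prod_le_prod (fun i _ => by positivity) (fun i _ => ?_)
          exact pow_le_pow_left₀ (abs_nonneg _) (h2 i) _
      _ = r ^ (∑ i, m i) := by rw [Finset.prod_pow_eq_pow_sum]
      _ ≤ r ^ (2 * d) := by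
          refine pow_le_pow_right₀ hr1 ?_
          refine le_trans ?_ hq
          have : (∑ i, m i) = m.sum fun _ e => e := by
            rw [Finsupp.sum]
            exact (Finset.sum_subset (Finset.subset_univ _)
              (fun i _ hi => Finsupp.notMem_support_iff.mp hi)).symm
          rw [this]
          exact le_totalDegree hm
      _ = S2 ^ d := by rw [pow_mul, hr2]
  calc |eval a q| = |∑ m ∈ q.support, coeff m q * ∏ i, a i ^ m i| := by rw [eval_eq']
    _ ≤ ∑ m ∈ q.support, |coeff m q * ∏ i, a i ^ m i| := Finset.abs_sum_le_sum_abs _ _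
    _ ≤ ∑ m ∈ q.support, |coeff m q| * S2 ^ d := Finset.sum_le_sum key
    _ = (∑ m ∈ q.support, |coeff m q|) * S2 ^ d := by rw [Finset.sum_mul]

theorem ptd_bounded_on_S' (n d : ℕ) (S : Set (Fin n → ℝ))
    (hS : ∀ a ∈ S, 1 ≤ ∑ i, (a i) ^ 2)
    (p : MvPolynomial (Fin n) ℝ) (hp : p ∈ Bset n d S) :
    ∃ C : ℝ, ∀ a ∈ S, ∀ s : ℝ, (∑ i, (a i) ^ 2) * s ^ 2 ≤ 1 →
      |eval (Fin.snoc a s)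
        (rename (Fin.castSucc) p * (X (Fin.last n)) ^ d : MvPolynomial (Fin (n + 1)) ℝ)| ≤ C := by
  obtain ⟨q, hqdeg, hq⟩ := hp
  obtain ⟨D, hD0, hD⟩ := poly_growth_bound n d q hqdeg
  refine ⟨Real.sqrt D, fun a ha s hs => ?_⟩
  have heval : eval (Fin.snoc a s)
      (rename (Fin.castSucc) p * (X (Fin.last n)) ^ d : MvPolynomial (Fin (n + 1)) ℝ)
      = eval a p * s ^ d := by
    simp only [map_mul, map_pow, eval_rename, eval_X, Fin.snoc_last]
    rw [show Fin.snoc a s ∘ Fin.castSucc = a by funext i; simp]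
  rw [heval]
  set S2 := ∑ i, (a i) ^ 2 with hS2
  have hS2one : 1 ≤ S2 := hS a ha
  have hsq : (eval a p * s ^ d) ^ 2 ≤ D := by
    have h1 : (eval a p * s ^ d) ^ 2 = (eval a p) ^ 2 * (s ^ 2) ^ d := by ring
    rw [h1]
    calc (eval a p) ^ 2 * (s ^ 2) ^ d ≤ eval a q * (s ^ 2) ^ d := by
          exact mul_le_mul_of_nonneg_right (hq a ha) (by positivity)
      _ ≤ |eval a q| * (s ^ 2) ^ d := by
          exact mul_le_mul_of_nonneg_right (le_abs_self _) (by positivity)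
      _ ≤ D * S2 ^ d * (s ^ 2) ^ d := by
          exact mul_le_mul_of_nonneg_right (hD a hS2one) (by positivity)
      _ = D * (S2 * s ^ 2) ^ d := by rw [mul_pow]; ring
      _ ≤ D * 1 := by
          refine mul_le_mul_of_nonneg_left ?_ hD0
          exact pow_le_one₀ (by positivity) hs
      _ = D := mul_one D
  calc |eval a p * s ^ d| = Real.sqrt ((eval a p * s ^ d) ^ 2) := (Real.sqrt_sq_eq_abs _).symm
    _ ≤ Real.sqrt D := Real.sqrt_le_sqrt hsq
end
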